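/- Let β > 2, K > 0, s ∈ ℝ, and a_n ≥ 0 with log(max(a_n,1))/n → 0. Set u_n = (s - β log(K a_n) - n/β)/√n. Then exp((2/β)(s - n/β - u_n√n)) · G_Z(u_n) → 0 as n → ∞. -/
import Mathlib


open Real Filter

open MeasureTheory

lemma gauss_int : ∫ x : ℝ, Real.exp (-x ^ 2 / 2) = Real.sqrt (2 * Real.pi) := by
  have h4 := integral_gaussian (1/2 : ℝ)
  have : ∀ x : ℝ, -x ^ 2 / 2 = -(1/2 : ℝ) * x ^ 2 := by intro x; ring
  simp_rw [this, h4]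
  rw [show Real.pi / (1/2) = 2 * Real.pi by ring]

lemma gauss_integrable : Integrable (fun x : ℝ => Real.exp (-x ^ 2 / 2)) := by
  have h : Integrable (fun x : ℝ => Real.exp (-(1/2 : ℝ) * x ^ 2)) :=
    integrable_exp_neg_mul_sq (by norm_num)
  convert h using 2 with x
  ring

lemma gauss_shift_integrable (lam : ℝ) :
    Integrable (fun x : ℝ => Real.exp (-(x + lam) ^ 2 / 2)) :=
  gauss_integrable.comp_add_right lam

lemma gauss_shift_int (lam : ℝ) :
    ∫ x : ℝ, Real.exp (-(x + lam) ^ 2 / 2) = Real.sqrt (2 * Real.pi) := by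
  rw [MeasureTheory.integral_add_right_eq_self (fun x : ℝ => Real.exp (-x ^ 2 / 2)) lam]
  exact gauss_int

/-- Standard normal CDF. -/
noncomputable def stdGaussCDF (t : ℝ) : ℝ :=
  (Real.sqrt (2 * Real.pi))⁻¹ * ∫ x in Set.Iio t, Real.exp (-x ^ 2 / 2)

lemma stdGaussCDF_nonneg (t : ℝ) : 0 ≤ stdGaussCDF t := by
  apply mul_nonneg (inv_nonneg.2 (Real.sqrt_nonneg _))
  exact MeasureTheory.setIntegral_nonneg measurableSet_Iio fun x _ => (Real.exp_nonneg _)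

lemma stdGaussCDF_chernoff (t lam : ℝ) (hlam : 0 ≤ lam) :
    stdGaussCDF t ≤ Real.exp (lam * t + lam ^ 2 / 2) := by
  have h2π : 0 < Real.sqrt (2 * Real.pi) := Real.sqrt_pos.2 (by positivity)
  have step1 : (∫ x in Set.Iio t, Real.exp (-x ^ 2 / 2))
      ≤ Real.exp (lam * t + lam ^ 2 / 2) *
        ∫ x in Set.Iio t, Real.exp (-(x + lam) ^ 2 / 2) := by
    rw [← MeasureTheory.integral_const_mul]
    apply MeasureTheory.setIntegral_mono_on
    · exact gauss_integrable.integrableOn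
    · exact ((gauss_shift_integrable lam).const_mul _).integrableOn
    · exact measurableSet_Iio
    · intro x hx
      rw [← Real.exp_add, Real.exp_le_exp]
      have : x ≤ t := le_of_lt hx
      nlinarith
  have step2 : (∫ x in Set.Iio t, Real.exp (-(x + lam) ^ 2 / 2)) ≤ Real.sqrt (2 * Real.pi) := by
    rw [← gauss_shift_int lam]
    exact MeasureTheory.setIntegral_le_integral (gauss_shift_integrable lam)
      (Filter.Eventually.of_forall fun x => Real.exp_nonneg _)
  unfold stdGaussCDF
  rw [inv_mul_le_iff₀ h2π]
  calc (∫ x in Set.Iio t, Real.exp (-x ^ 2 / 2))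
      ≤ Real.exp (lam * t + lam ^ 2 / 2) * ∫ x in Set.Iio t, Real.exp (-(x + lam) ^ 2 / 2) := step1
    _ ≤ Real.exp (lam * t + lam ^ 2 / 2) * Real.sqrt (2 * Real.pi) :=
        mul_le_mul_of_nonneg_left step2 (Real.exp_nonneg _)
    _ = Real.sqrt (2 * Real.pi) * Real.exp (lam * t + lam ^ 2 / 2) := mul_comm _ _

/-- Inner-boundary integrated term vanishes: if `a_n ≥ 0` with
`log(max(a_n,1))/n → 0` and `u_n = (s - β log(K a_n) - n/β)/√n`, then
`exp((2/β)(s - n/β - u_n √n)) G_Z(u_n) → 0`. -/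
theorem inner_boundary_term_vanishes (β K s : ℝ) (hβ : 2 < β) (hK : 0 < K)
    (a : ℕ → ℝ) (ha : ∀ n, 0 ≤ a n)
    (halog : Tendsto (fun n : ℕ => Real.log (max (a n) 1) / (n : ℝ))
      atTop (nhds 0)) :
    Tendsto (fun n : ℕ =>
        Real.exp ((2 / β) * (s - (n : ℝ) / β -
            ((s - β * Real.log (K * a n) - (n : ℝ) / β) / Real.sqrt n) *
              Real.sqrt n)) *
          stdGaussCDF ((s - β * Real.log (K * a n) - (n : ℝ) / β) / Real.sqrt n))
      atTop (nhds 0) := by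
  have hβ0 : 0 < β := by linarith
  have hβne : β ≠ 0 := ne_of_gt hβ0
  set M := max (Real.log K) 0 with hM
  set m : ℕ → ℝ := fun n => Real.log (max (a n) 1) with hm
  have hm0 : ∀ n, 0 ≤ m n := fun n => Real.log_nonneg (le_max_right _ _)
  have hlogle : ∀ n, Real.log (K * a n) ≤ M + m n := by
    intro n
    rcases eq_or_lt_of_le (ha n) with h0 | hpos
    · rw [← h0, mul_zero, Real.log_zero]
      exact add_nonneg (le_max_right _ _) (hm0 n)
    · rw [Real.log_mul (ne_of_gt hK) (ne_of_gt hpos)]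
      exact add_le_add (le_max_left _ _) (Real.log_le_log hpos (le_max_left _ _))
  have key : ∀ n : ℕ, 1 ≤ n →
      Real.exp ((2 / β) * (s - (n : ℝ) / β -
            ((s - β * Real.log (K * a n) - (n : ℝ) / β) / Real.sqrt n) *
              Real.sqrt n)) *
          stdGaussCDF ((s - β * Real.log (K * a n) - (n : ℝ) / β) / Real.sqrt n)
        ≤ Real.exp (s / β + M + m n - n / (2 * β ^ 2)) := by
    intro n hn
    have hn0 : (0:ℝ) < n := by exact_mod_cast hn
    set c := s - β * Real.log (K * a n) - (n : ℝ) / β with hc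
    have hsq : (0:ℝ) < Real.sqrt n := Real.sqrt_pos.2 hn0
    have hsq2 : Real.sqrt n ^ 2 = n := Real.sq_sqrt hn0.le
    have huc : c / Real.sqrt n * Real.sqrt n = c := div_mul_cancel₀ _ (ne_of_gt hsq)
    have hch := stdGaussCDF_chernoff (c / Real.sqrt n) (Real.sqrt n / β) (by positivity)
    have e1 : Real.sqrt n / β * (c / Real.sqrt n) = c / β := by
      field_simp
    have e2 : (Real.sqrt n / β) ^ 2 / 2 = n / (2 * β ^ 2) := by
      rw [div_pow, hsq2]; ring
    calc Real.exp ((2/β) * (s - n/β - c / Real.sqrt n * Real.sqrt n)) * stdGaussCDF (c / Real.sqrt n)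
        ≤ Real.exp ((2/β) * (s - n/β - c)) *
            Real.exp (Real.sqrt n / β * (c / Real.sqrt n) + (Real.sqrt n / β) ^ 2 / 2) := by
          rw [huc]; exact mul_le_mul_of_nonneg_left hch (Real.exp_nonneg _)
      _ = Real.exp ((2/β) * (s - n/β - c) + c / β + n / (2 * β ^ 2)) := by
          rw [← Real.exp_add, e1, e2, add_assoc]
      _ ≤ Real.exp (s / β + M + m n - n / (2 * β ^ 2)) := by
          rw [Real.exp_le_exp]
          have heq : (2/β) * (s - n/β - c) + c / β + n / (2 * β ^ 2)
              = Real.log (K * a n) + s / β - n / (2 * β ^ 2) := by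
            rw [hc]; field_simp; ring
          rw [heq]
          linarith [hlogle n]
  have hb : Tendsto (fun n : ℕ => Real.exp (s / β + M + m n - n / (2 * β ^ 2)))
      atTop (nhds 0) := by
    apply Real.tendsto_exp_atBot.comp
    have hneg : (0:ℝ) - 1 / (2 * β ^ 2) < 0 := by
      have : (0:ℝ) < 1 / (2 * β ^ 2) := by positivity
      linarith
    have h1 : Tendsto (fun n : ℕ => (n : ℝ) * (m n / n - 1 / (2 * β ^ 2))) atTop atBot :=
      Tendsto.atTop_mul_neg hneg tendsto_natCast_atTop_atTop
        (halog.sub tendsto_const_nhds)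
    have h2 : Tendsto (fun n : ℕ => m n - (n : ℝ) / (2 * β ^ 2)) atTop atBot := by
      apply h1.congr' (eventually_atTop.2 ⟨1, fun n hn => ?_⟩)
      have hn0 : ((n : ℝ)) ≠ 0 := by
        have : (0:ℝ) < n := by exact_mod_cast hn
        exact ne_of_gt this
      field_simp
    have h3 := tendsto_atBot_add_const_left atTop (s / β + M) h2
    exact h3.congr (fun n => by ring)
  apply tendsto_of_tendsto_of_tendsto_of_le_of_le' tendsto_const_nhds hb
  · exact Filter.Eventually.of_forall fun n =>
      mul_nonneg (Real.exp_nonneg _) (stdGaussCDF_nonneg _)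
  · exact eventually_atTop.2 ⟨1, key⟩
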